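/- Let $n,r,k,t$ be positive integers with $n\ge r\ge t+1$ and $k\ge2$. Suppose $\mathcal{F}\subset\mathcal{L}_{n,r,k}$ is a maximal $t$-intersecting family with $\tau_t(\mathcal{F})=t+1$, let $\mathcal{T}$ be the set of its $t$-covers of size $t+1$, assume $|\mathcal{T}|\ge2$, $\mathcal{T}$ has a $t$-cover of size $t$, and $|\bigcup_{T\in\mathcal{T}}T|=t+2$. Then $|\mathcal{F}|\le 2\binom{n-t-1}{r-t-1}k^{r-t-1}+(r-1)(r-t+1)\binom{n-t-2}{r-t-2}k^{r-t-2}$. -/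

import Mathlib

open Finset

attribute [local instance] Classical.propDecidable

/-- The ground set `[n] × [k]`. -/
def box (n k : ℕ) : Finset (ℕ × ℕ) := Finset.Icc 1 n ×ˢ Finset.Icc 1 k

/-- A `k`-signed set on `[n]`: a subset of `[n] × [k]` with pairwise distinct first coordinates. -/
def IsSigned (n k : ℕ) (T : Finset (ℕ × ℕ)) : Prop :=
  T ⊆ box n k ∧ (T.image Prod.fst).card = T.card

/-- `L n r k`: the collection of `k`-signed `r`-sets on `[n]`. -/
def L (n r k : ℕ) : Finset (Finset (ℕ × ℕ)) :=
  (box n k).powerset.filter (fun F => F.card = r ∧ (F.image Prod.fst).card = r)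

/-- A family is `t`-intersecting if any two members meet in at least `t` elements. -/
def IsTIntersecting (t : ℕ) (F : Finset (Finset (ℕ × ℕ))) : Prop :=
  ∀ A ∈ F, ∀ B ∈ F, t ≤ (A ∩ B).card

/-- `T` is a `t`-cover of the family `F`: a `k`-signed set meeting every member in ≥ `t` points. -/
def IsTCover (n k t : ℕ) (F : Finset (Finset (ℕ × ℕ))) (T : Finset (ℕ × ℕ)) : Prop :=
  IsSigned n k T ∧ ∀ A ∈ F, t ≤ (T ∩ A).card

/-- `F` is a maximal `t`-intersecting subfamily of `L n r k`. -/
def IsMaximalTIntersecting (n r k t : ℕ) (F : Finset (Finset (ℕ × ℕ))) : Prop :=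
  F ⊆ L n r k ∧ IsTIntersecting t F ∧
    ∀ G ⊆ L n r k, IsTIntersecting t G → F ⊆ G → G = F

/-- A `t`-intersecting family is trivial if all members contain a fixed `k`-signed `t`-set. -/
def IsTrivial (n k t : ℕ) (F : Finset (Finset (ℕ × ℕ))) : Prop :=
  ∃ T, IsSigned n k T ∧ T.card = t ∧ ∀ A ∈ F, T ⊆ A

/-- `Msig d = {(1,1),(2,1),…,(d,1)}`. -/
def Msig (d : ℕ) : Finset (ℕ × ℕ) := (Finset.Icc 1 d).image (fun x => (x, 1))

/-- The family `H₁(n,r,k,ℓ,t)`. -/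
def H1 (n r k l t : ℕ) : Finset (Finset (ℕ × ℕ)) :=
  (L n r k).filter (fun F =>
    (Msig t ⊆ F ∧ t + 1 ≤ (F ∩ Msig l).card) ∨
    (¬ Msig t ⊆ F ∧ (F ∩ Msig l).card = l - 1))

/-- The family `H₂(n,r,k,c,t)`. -/
def H2 (n r k c t : ℕ) : Finset (Finset (ℕ × ℕ)) :=
  (L n r k).filter (fun F =>
    (Msig t ⊆ F ∧ t + 1 ≤ (F ∩ Msig r).card) ∨
    (F ∩ Msig r = Msig t ∧ Msig c \ Msig r ⊆ F) ∨
    (¬ Msig t ⊆ F ∧ (F ∩ Msig r).card = r - 1 ∧ (F ∩ (Msig c \ Msig r)).card = 1))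

/-- The set of all `t`-covers of `F` of size `t+1`. -/
noncomputable def TauSet (n k t : ℕ) (F : Finset (Finset (ℕ × ℕ))) : Finset (Finset (ℕ × ℕ)) :=
  (box n k).powerset.filter (fun T => IsTCover n k t F T ∧ T.card = t + 1)

/-!
Every cover in `𝒯` contains the `t`-set `S` (it meets each of them in `t` points), so
`𝒯 ∋ S ∪ {a}, S ∪ {b}` and `⋃ 𝒯 = X := S ∪ {a, b}`. Since `S` is not a `t`-cover of `F`, some
`F₀ ∈ F` has `|S ∩ F₀| < t`, hence `a, b ∈ F₀`. Sort the members `A` of `F` by their trace on `X`: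
either `A ⊇ S ∪ {a}` or `A ⊇ S ∪ {b}`; or `A ∩ X = S`, and then `|A ∩ F₀| ≥ t` forces `A` to
contain one of the at most `r - t - 1` points `x ∈ F₀ \ X`; or `A ∩ X = X \ {s}` for some `s ∈ S`.
In the last two cases the trace `Y` of `A` on `X ∪ {x}`, resp. `X`, is a signed `(t+1)`-set
outside `𝒯`, so it meets some `G ∈ F` in fewer than `t` points, and `A` must contain one of the
at most `r - t` points of `G \ X`. This covers `F` by two stars of `(t+1)`-sets and
`(r - 1)(r - t)` stars of `(t+2)`-sets.
-/

def signedStar (n r k : ℕ) (B : Finset (ℕ × ℕ)) : Finset (Finset (ℕ × ℕ)) :=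
  {A ∈ L n r k | B ⊆ A}

lemma mem_L {n r k : ℕ} {A : Finset (ℕ × ℕ)} :
    A ∈ L n r k ↔ A ⊆ box n k ∧ #A = r ∧ #(A.image Prod.fst) = r := by
  simp [L]

lemma injOn_fst_of_mem_L {n r k : ℕ} {A : Finset (ℕ × ℕ)} (hA : A ∈ L n r k) :
    Set.InjOn Prod.fst (A : Set (ℕ × ℕ)) := by
  rw [← card_image_iff, (mem_L.1 hA).2.2, (mem_L.1 hA).2.1]

lemma isSigned_of_subset_of_mem_L {n r k : ℕ} {A B : Finset (ℕ × ℕ)} (hA : A ∈ L n r k)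
    (hBA : B ⊆ A) : IsSigned n k B :=
  ⟨hBA.trans (mem_L.1 hA).1,
    card_image_of_injOn ((injOn_fst_of_mem_L hA).mono (coe_subset.2 hBA))⟩

lemma filter_fst_eq_of_injOn {G : Finset (ℕ × ℕ)} (hG : Set.InjOn Prod.fst (G : Set (ℕ × ℕ)))
    {p : ℕ × ℕ} (hp : p ∈ G) : {q ∈ G | q.1 = p.1} = {p} := by
  ext q
  simp only [mem_filter, mem_singleton]
  exact ⟨fun ⟨hq, hqp⟩ => hG hq hp hqp, by rintro rfl; exact ⟨hp, rfl⟩⟩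

lemma card_signed_subsets_le (s : Finset ℕ) (j k : ℕ) :
    #{G ∈ (s ×ˢ Icc 1 k).powerset | #G = j ∧ #(G.image Prod.fst) = j} ≤
      (#s).choose j * k ^ j := by
  calc _ ≤ #((s.powersetCard j).sigma fun A => A.pi fun _ => Icc 1 k) := by
        refine card_le_card_of_surjOn (fun x => x.1.attach.image fun a => (a.1, x.2 a.1 a.2)) ?_
        intro G hG
        simp only [coe_filter, mem_powerset, Set.mem_ofPred_eq] at hG
        obtain ⟨hGs, hGj, hGi⟩ := hG
        have hinj : Set.InjOn Prod.fst (G : Set (ℕ × ℕ)) := by rw [← card_image_iff, hGi, hGj]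
        -- the fibre over `a` is a singleton, so summing `Prod.snd` over it reads off its sign
        refine ⟨⟨G.image Prod.fst, fun a _ => ∑ q ∈ G with q.1 = a, q.2⟩, ?_, ?_⟩
        · simp only [coe_sigma, Set.mem_sigma_iff, mem_coe, mem_powersetCard, Finset.mem_pi,
            forall_mem_image, image_subset_iff]
          refine ⟨⟨fun p hp => (mem_product.1 (hGs hp)).1, hGi⟩, fun p hp => ?_⟩
          · rw [filter_fst_eq_of_injOn hinj hp, sum_singleton]
            exact (mem_product.1 (hGs hp)).2
        · ext p
          simp only [mem_image, mem_attach, true_and, Subtype.exists]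
          constructor
          · rintro ⟨a, ⟨q, hq, rfl⟩, rfl⟩
            rw [filter_fst_eq_of_injOn hinj hq, sum_singleton]
            exact hq
          · intro hp
            exact ⟨p.1, ⟨p, hp, rfl⟩, by rw [filter_fst_eq_of_injOn hinj hp, sum_singleton]⟩
    _ = (#s).choose j * k ^ j := by
        rw [card_sigma, sum_const_nat fun A hA => ?_, card_powersetCard]
        rw [card_pi, prod_const, Nat.card_Icc, Nat.add_sub_cancel, (mem_powersetCard.1 hA).2]

lemma card_signedStar_le (n r k : ℕ) (B : Finset (ℕ × ℕ)) :
    #(signedStar n r k B) ≤ (n - #B).choose (r - #B) * k ^ (r - #B) := by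
  rcases (signedStar n r k B).eq_empty_or_nonempty with h | ⟨A₀, hA₀⟩
  · simp [h]
  obtain ⟨hA₀L, hBA₀⟩ := mem_filter.1 hA₀
  have hB := isSigned_of_subset_of_mem_L hA₀L hBA₀
  set s := Icc 1 n \ B.image Prod.fst
  have hs : #s = n - #B := by
    rw [card_sdiff_of_subset, Nat.card_Icc, hB.2, Nat.add_sub_cancel]
    intro a ha
    obtain ⟨p, hp, rfl⟩ := mem_image.1 ha
    exact (mem_product.1 (hB.1 hp)).1
  calc #(signedStar n r k B)
      ≤ #{G ∈ (s ×ˢ Icc 1 k).powerset | #G = r - #B ∧ #(G.image Prod.fst) = r - #B} := by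
        refine card_le_card_of_injOn (· \ B) (fun A hA => ?_) fun A hA A' hA' h => ?_
        · obtain ⟨hAL, hBA⟩ := mem_filter.1 hA
          have hinj := injOn_fst_of_mem_L hAL
          have hcard : #(A \ B) = r - #B := by rw [card_sdiff_of_subset hBA, (mem_L.1 hAL).2.1]
          simp only [coe_filter, mem_powerset, Set.mem_ofPred_eq]
          refine ⟨fun p hp => ?_, hcard, ?_⟩
          · obtain ⟨hpA, hpB⟩ := mem_sdiff.1 hp
            obtain ⟨hpn, hpk⟩ := mem_product.1 ((mem_L.1 hAL).1 hpA)
            refine mem_product.2 ⟨mem_sdiff.2 ⟨hpn, ?_⟩, hpk⟩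
            intro hpB'
            obtain ⟨q, hq, hqp⟩ := mem_image.1 hpB'
            exact hpB (hinj (hBA hq) hpA hqp ▸ hq)
          · rw [← hcard]
            exact card_image_of_injOn (hinj.mono (coe_subset.2 sdiff_subset))
        · have hA := (mem_filter.1 hA).2
          have hA' := (mem_filter.1 hA').2
          rw [← sdiff_union_of_subset hA, ← sdiff_union_of_subset hA']
          exact congrArg (· ∪ B) h
    _ ≤ (#s).choose (r - #B) * k ^ (r - #B) := card_signed_subsets_le s _ k
    _ = _ := by rw [hs]

section FinsetLemmas

variable {α : Type*} [DecidableEq α] {s u Z W : Finset α} {a : α} {t : ℕ}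

lemma subset_of_card_le_card_inter (h : #s ≤ #(s ∩ u)) : s ⊆ u :=
  inter_eq_left.1 (eq_of_subset_of_card_le inter_subset_left h)

lemma card_insert_inter_le : #(insert a s ∩ u) ≤ #(s ∩ u) + 1 := by
  by_cases ha : a ∈ u
  · rw [insert_inter_of_mem ha]
    exact card_insert_le _ _
  · rw [insert_inter_of_notMem ha]
    exact Nat.le_succ _

lemma mem_of_card_inter_lt (h : t ≤ #(insert a s ∩ u)) (hs : #(s ∩ u) < t) : a ∈ u := by
  by_contra ha
  rw [insert_inter_of_notMem ha] at h
  omega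

lemma card_sdiff_le_of_le_card_inter (h : t ≤ #(Z ∩ s)) : #(s \ Z) ≤ #s - t := by
  rw [card_sdiff]
  omega

lemma exists_mem_inter_notMem {A G : Finset α} (hAG : t ≤ #(A ∩ G)) (hWG : #(W ∩ G) < t)
    (hAZ : A ∩ Z ⊆ W) : ∃ z ∈ A ∩ G, z ∉ Z := by
  by_contra! h
  have : A ∩ G ⊆ W ∩ G := fun p hp =>
    mem_inter.2 ⟨hAZ (mem_inter.2 ⟨(mem_inter.1 hp).1, h p hp⟩), (mem_inter.1 hp).2⟩
  have := card_le_card this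
  omega

end FinsetLemmas

section Branching

variable {n r k t : ℕ} {F : Finset (Finset (ℕ × ℕ))} {Y Z : Finset (ℕ × ℕ)}

lemma filter_inter_eq_subset_biUnion_signedStar (hFL : F ⊆ L n r k) (hFt : IsTIntersecting t F)
    {G : Finset (ℕ × ℕ)} (hG : G ∈ F) (hYG : #(Y ∩ G) < t) :
    {A ∈ F | A ∩ Z = Y} ⊆ (G \ Z).biUnion fun z => signedStar n r k (insert z Y) := by
  intro A hA
  obtain ⟨hAF, hAZ⟩ := mem_filter.1 hA
  obtain ⟨z, hz, hzZ⟩ := exists_mem_inter_notMem (hFt A hAF G hG) hYG hAZ.le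
  refine mem_biUnion.2 ⟨z, mem_sdiff.2 ⟨(mem_inter.1 hz).2, hzZ⟩, mem_filter.2 ⟨hFL hAF, ?_⟩⟩
  exact insert_subset (mem_inter.1 hz).1 (hAZ ▸ inter_subset_left)

lemma card_filter_inter_eq_le (hFL : F ⊆ L n r k) (hFt : IsTIntersecting t F)
    (hZ : ∀ A ∈ F, t ≤ #(Z ∩ A)) (hYZ : Y ⊆ Z) (hY : #Y = t + 1)
    (hYF : ¬ IsTCover n k t F Y) :
    #{A ∈ F | A ∩ Z = Y} ≤ (r - t) * ((n - (t + 2)).choose (r - (t + 2)) * k ^ (r - (t + 2))) := by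
  rcases ({A ∈ F | A ∩ Z = Y} : Finset _).eq_empty_or_nonempty with h | ⟨A, hA⟩
  · simp [h]
  obtain ⟨hAF, hAZ⟩ := mem_filter.1 hA
  obtain ⟨G, hG, hYG⟩ : ∃ G ∈ F, #(Y ∩ G) < t := by
    have hsigned := isSigned_of_subset_of_mem_L (hFL hAF) (hAZ ▸ inter_subset_left)
    by_contra! h
    exact hYF ⟨hsigned, h⟩
  have hGZ : #(G \ Z) ≤ r - t := (mem_L.1 (hFL hG)).2.1 ▸ card_sdiff_le_of_le_card_inter (hZ G hG)
  calc _ ≤ #((G \ Z).biUnion fun z => signedStar n r k (insert z Y)) :=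
        card_le_card (filter_inter_eq_subset_biUnion_signedStar hFL hFt hG hYG)
    _ ≤ #(G \ Z) * ((n - (t + 2)).choose (r - (t + 2)) * k ^ (r - (t + 2))) := by
        refine card_biUnion_le_card_mul _ _ _ fun z hz => ?_
        have hzY : #(insert z Y) = t + 2 := by
          rw [card_insert_of_notMem fun h => (mem_sdiff.1 hz).2 (hYZ h), hY]
        exact hzY ▸ card_signedStar_le n r k (insert z Y)
    _ ≤ _ := Nat.mul_le_mul_right _ hGZ

end Branching

section PairCovers

variable {n r k t : ℕ} {F : Finset (Finset (ℕ × ℕ))} {A F₀ S : Finset (ℕ × ℕ)} {a b : ℕ × ℕ}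

lemma exists_inter_insert_eq_insert (hFt : IsTIntersecting t F) (hA : A ∈ F) (hF₀ : F₀ ∈ F)
    (hF₀S : #(S ∩ F₀) < t) (hSA : S ⊆ A) (haA : a ∉ A) (hbA : b ∉ A) :
    ∃ x ∈ F₀ \ insert a (insert b S),
      A ∩ insert x (insert a (insert b S)) = insert x S := by
  have hAX : A ∩ insert a (insert b S) = S := by
    rw [inter_insert_of_notMem haA, inter_insert_of_notMem hbA, inter_eq_right.2 hSA]
  obtain ⟨x, hx, hxX⟩ := exists_mem_inter_notMem (hFt A hA F₀ hF₀) hF₀S hAX.le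
  refine ⟨x, mem_sdiff.2 ⟨(mem_inter.1 hx).2, hxX⟩, ?_⟩
  rw [inter_insert_of_mem (mem_inter.1 hx).1, hAX]

lemma exists_inter_eq_erase (hS : #S = t) (hSa : t ≤ #(insert a S ∩ A))
    (hSb : t ≤ #(insert b S ∩ A)) (hSA : ¬ S ⊆ A) :
    ∃ s ∈ S, A ∩ insert a (insert b S) = (insert a (insert b S)).erase s := by
  have hlt : #(S ∩ A) < t := by
    by_contra! h
    exact hSA (subset_of_card_le_card_inter (by omega))
  have haA := mem_of_card_inter_lt hSa hlt
  have hbA := mem_of_card_inter_lt hSb hlt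
  obtain ⟨s, hsS, hsA⟩ := not_subset.1 hSA
  have hSA' : S ∩ A = S.erase s := by
    refine eq_of_subset_of_card_le (fun p hp => mem_erase.2
      ⟨ne_of_mem_of_not_mem (mem_inter.1 hp).2 hsA, (mem_inter.1 hp).1⟩) ?_
    have := card_insert_inter_le (a := a) (s := S) (u := A)
    rw [card_erase_of_mem hsS]
    omega
  refine ⟨s, hsS, ?_⟩
  rw [inter_comm, insert_inter_of_mem haA, insert_inter_of_mem hbA, hSA',
    erase_insert_of_ne (ne_of_mem_of_not_mem haA hsA),
    erase_insert_of_ne (ne_of_mem_of_not_mem hbA hsA)]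

lemma subset_union_of_pair_covers (hFL : F ⊆ L n r k) (hFt : IsTIntersecting t F) (hS : #S = t)
    (hSa : ∀ A ∈ F, t ≤ #(insert a S ∩ A)) (hSb : ∀ A ∈ F, t ≤ #(insert b S ∩ A))
    (hF₀ : F₀ ∈ F) (hF₀S : #(S ∩ F₀) < t) :
    F ⊆ signedStar n r k (insert a S) ∪ signedStar n r k (insert b S) ∪
      (F₀ \ insert a (insert b S)).biUnion (fun x =>
        {A ∈ F | A ∩ insert x (insert a (insert b S)) = insert x S}) ∪
      S.biUnion (fun s =>
        {A ∈ F | A ∩ insert a (insert b S) = (insert a (insert b S)).erase s}) := by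
  intro A hA
  by_cases hSA : S ⊆ A
  · by_cases haA : a ∈ A
    · exact mem_union_left _ <| mem_union_left _ <| mem_union_left _ <|
        mem_filter.2 ⟨hFL hA, insert_subset haA hSA⟩
    by_cases hbA : b ∈ A
    · exact mem_union_left _ <| mem_union_left _ <| mem_union_right _ <|
        mem_filter.2 ⟨hFL hA, insert_subset hbA hSA⟩
    obtain ⟨x, hx, hxA⟩ := exists_inter_insert_eq_insert hFt hA hF₀ hF₀S hSA haA hbA
    exact mem_union_left _ <| mem_union_right _ <| mem_biUnion.2 ⟨x, hx, mem_filter.2 ⟨hA, hxA⟩⟩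
  · obtain ⟨s, hs, hsA⟩ := exists_inter_eq_erase hS (hSa A hA) (hSb A hA) hSA
    exact mem_union_right _ <| mem_biUnion.2 ⟨s, hs, mem_filter.2 ⟨hA, hsA⟩⟩

end PairCovers

lemma sub_one_add_mul_le (r t : ℕ) : (r - t - 1 + t) * (r - t) ≤ (r - 1) * (r - t + 1) := by
  rcases le_or_gt r t with h | h
  · simp [Nat.sub_eq_zero_of_le h]
  · rw [show r - t - 1 + t = r - 1 by omega]
    exact Nat.mul_le_mul_left _ (Nat.le_succ _)

theorem card_le_of_pair_covers {n r k t : ℕ} {F : Finset (Finset (ℕ × ℕ))} {S : Finset (ℕ × ℕ)}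
    {a b : ℕ × ℕ} (hFL : F ⊆ L n r k) (hFt : IsTIntersecting t F) (hS : #S = t) (haS : a ∉ S)
    (hbS : b ∉ S) (hab : a ≠ b) (hSa : ∀ A ∈ F, t ≤ #(insert a S ∩ A))
    (hSb : ∀ A ∈ F, t ≤ #(insert b S ∩ A)) (hSF : ¬ ∀ A ∈ F, t ≤ #(S ∩ A))
    (hcov : ∀ Y, IsTCover n k t F Y → #Y = t + 1 → S ⊆ Y ∧ Y ⊆ insert a (insert b S)) :
    #F ≤ 2 * (n - t - 1).choose (r - t - 1) * k ^ (r - t - 1) +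
      (r - 1) * (r - t + 1) * (n - t - 2).choose (r - t - 2) * k ^ (r - t - 2) := by
  set X := insert a (insert b S)
  have hSX : S ⊆ X := (subset_insert b S).trans (subset_insert a _)
  obtain ⟨F₀, hF₀, hF₀S⟩ : ∃ F₀ ∈ F, #(S ∩ F₀) < t := by
    by_contra! h
    exact hSF h
  set c₁ := (n - (t + 1)).choose (r - (t + 1)) * k ^ (r - (t + 1))
  set c₂ := (n - (t + 2)).choose (r - (t + 2)) * k ^ (r - (t + 2))
  have hstar : ∀ c ∉ S, #(signedStar n r k (insert c S)) ≤ c₁ := fun c hc => by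
    simpa only [card_insert_of_notMem hc, hS] using card_signedStar_le n r k (insert c S)
  have hXcov : ∀ Z, X ⊆ Z → ∀ A ∈ F, t ≤ #(Z ∩ A) := fun Z hZ A hA =>
    (hSa A hA).trans <| card_le_card <| inter_subset_inter_right <|
      (insert_subset_insert a (subset_insert b S)).trans hZ
  have hC : ∀ x ∈ F₀ \ X, #{A ∈ F | A ∩ insert x X = insert x S} ≤ (r - t) * c₂ := by
    intro x hx
    have hxX := (mem_sdiff.1 hx).2
    have hxS : #(insert x S) = t + 1 := by rw [card_insert_of_notMem fun h => hxX (hSX h), hS]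
    exact card_filter_inter_eq_le hFL hFt (hXcov _ (subset_insert x X))
      (insert_subset_insert x hSX) hxS fun hx' => hxX ((hcov _ hx' hxS).2 (mem_insert_self x S))
  have hD : ∀ s ∈ S, #{A ∈ F | A ∩ X = X.erase s} ≤ (r - t) * c₂ := by
    intro s hs
    have hXcard : #(X.erase s) = t + 1 := by
      rw [card_erase_of_mem (hSX hs), card_insert_of_notMem (by simp [hab, haS]),
        card_insert_of_notMem hbS, hS, Nat.add_sub_cancel]
    exact card_filter_inter_eq_le hFL hFt (hXcov _ subset_rfl) (erase_subset s X) hXcard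
      fun hs' => notMem_erase s X ((hcov _ hs' hXcard).1 hs)
  have hF₀X : #(F₀ \ X) ≤ r - t - 1 := by
    have hbF₀ := mem_of_card_inter_lt (hSb F₀ hF₀) hF₀S
    have hsub : insert b (insert a S ∩ F₀) ⊆ X ∩ F₀ :=
      insert_subset (mem_inter.2 ⟨mem_insert_of_mem (mem_insert_self b S), hbF₀⟩)
        (inter_subset_inter_right (insert_subset_insert a (subset_insert b S)))
    have hXF₀ : t + 1 ≤ #(X ∩ F₀) := by
      have := card_le_card hsub
      rw [card_insert_of_notMem (by simp [hab.symm, hbS])] at this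
      have := hSa F₀ hF₀
      omega
    have := card_sdiff_le_of_le_card_inter hXF₀
    rwa [(mem_L.1 (hFL hF₀)).2.1, ← Nat.sub_sub] at this
  have hcover := subset_union_of_pair_covers hFL hFt hS hSa hSb hF₀ hF₀S
  calc #F ≤ #(signedStar n r k (insert a S)) + #(signedStar n r k (insert b S)) +
        #((F₀ \ X).biUnion fun x => {A ∈ F | A ∩ insert x X = insert x S}) +
        #(S.biUnion fun s => {A ∈ F | A ∩ X = X.erase s}) := by
        refine (card_le_card hcover).trans ((card_union_le _ _).trans (add_le_add_left ?_ _))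
        exact (card_union_le _ _).trans (add_le_add_left (card_union_le _ _) _)
    _ ≤ c₁ + c₁ + (r - t - 1) * ((r - t) * c₂) + t * ((r - t) * c₂) := by
        gcongr
        · exact hstar a haS
        · exact hstar b hbS
        · exact (card_biUnion_le_card_mul _ _ _ hC).trans (Nat.mul_le_mul_right _ hF₀X)
        · exact (card_biUnion_le_card_mul _ _ _ hD).trans_eq (by rw [hS])
    _ = 2 * c₁ + (r - t - 1 + t) * (r - t) * c₂ := by ring
    _ ≤ 2 * c₁ + (r - 1) * (r - t + 1) * c₂ := by grw [sub_one_add_mul_le r t]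
    _ = _ := by simp only [c₁, c₂, Nat.sub_sub]; ring

lemma exists_eq_insert_pair_of_card_sup {α : Type*} [DecidableEq α] {𝒯 : Finset (Finset α)}
    {S : Finset α} {t : ℕ} (h𝒯 : ∀ T ∈ 𝒯, #T = t + 1) (hS : #S = t) (hST : ∀ T ∈ 𝒯, S ⊆ T)
    (h𝒯card : 2 ≤ #𝒯) (hsup : #(𝒯.sup id) = t + 2) :
    ∃ a ∉ S, ∃ b ∉ S, a ≠ b ∧ insert a S ∈ 𝒯 ∧ insert b S ∈ 𝒯 ∧
      𝒯.sup id = insert a (insert b S) := by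
  obtain ⟨T₁, hT₁, T₂, hT₂, hne⟩ := one_lt_card.1 h𝒯card
  obtain ⟨a, haS, rfl⟩ := exists_eq_insert_iff.2 ⟨hST T₁ hT₁, by rw [hS, h𝒯 T₁ hT₁]⟩
  obtain ⟨b, hbS, rfl⟩ := exists_eq_insert_iff.2 ⟨hST T₂ hT₂, by rw [hS, h𝒯 T₂ hT₂]⟩
  have hab : a ≠ b := by rintro rfl; exact hne rfl
  refine ⟨a, haS, b, hbS, hab, hT₁, hT₂, (eq_of_subset_of_card_le ?_ ?_).symm⟩
  · exact insert_subset (le_sup (f := id) hT₁ (mem_insert_self a S)) (le_sup (f := id) hT₂)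
  · rw [hsup, card_insert_of_notMem (by simp [hab, haS]), card_insert_of_notMem hbS, hS]

theorem bound_ell_t_plus_two_general (n r k t : ℕ)
    (F : Finset (Finset (ℕ × ℕ))) (hF : IsMaximalTIntersecting n r k t F)
    (hmin : ∀ T, IsTCover n k t F T → t + 1 ≤ T.card)
    (hcard : 2 ≤ (TauSet n k t F).card)
    (hS : ∃ S, IsTCover n k t (TauSet n k t F) S ∧ S.card = t)
    (hM : ((TauSet n k t F).sup id).card = t + 2) :
    F.card ≤ 2 * (n - t - 1).choose (r - t - 1) * k ^ (r - t - 1) +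
      (r - 1) * (r - t + 1) * (n - t - 2).choose (r - t - 2) * k ^ (r - t - 2) := by
  obtain ⟨S, hScov, hScard⟩ := hS
  have h𝒯 : ∀ T ∈ TauSet n k t F, IsTCover n k t F T ∧ #T = t + 1 := fun T hT =>
    (mem_filter.1 hT).2
  have hST : ∀ T ∈ TauSet n k t F, S ⊆ T := fun T hT =>
    subset_of_card_le_card_inter (hScard ▸ hScov.2 T hT)
  obtain ⟨a, haS, b, hbS, hab, ha, hb, hX⟩ :=
    exists_eq_insert_pair_of_card_sup (fun T hT => (h𝒯 T hT).2) hScard hST hcard hM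
  refine card_le_of_pair_covers hF.1 hF.2.1 hScard haS hbS hab (h𝒯 _ ha).1.2 (h𝒯 _ hb).1.2
    (fun hS => ?_) fun Y hY hYcard => ?_
  · have := hmin S ⟨hScov.1, hS⟩
    omega
  · have hYT : Y ∈ TauSet n k t F := mem_filter.2 ⟨mem_powerset.2 hY.1.1, hY, hYcard⟩
    exact ⟨hST Y hYT, hX ▸ le_sup (f := id) hYT⟩

theorem bound_ell_t_plus_two (n r k t : ℕ) (hn : 0 < n) (ht : 0 < t)
    (hk : 2 ≤ k) (htr : t + 1 ≤ r) (hrn : r ≤ n)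
    (F : Finset (Finset (ℕ × ℕ))) (hF : IsMaximalTIntersecting n r k t F)
    (hex : ∃ T, IsTCover n k t F T ∧ T.card = t + 1)
    (hmin : ∀ T, IsTCover n k t F T → t + 1 ≤ T.card)
    (hcard : 2 ≤ (TauSet n k t F).card)
    (hS : ∃ S, IsTCover n k t (TauSet n k t F) S ∧ S.card = t)
    (hM : ((TauSet n k t F).sup id).card = t + 2) :
    F.card ≤ 2 * (n - t - 1).choose (r - t - 1) * k ^ (r - t - 1) +
      (r - 1) * (r - t + 1) * (n - t - 2).choose (r - t - 2) * k ^ (r - t - 2) :=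
  bound_ell_t_plus_two_general n r k t F hF hmin hcard hS hM
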